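/- arXiv:2002.05693 — 5 statements merged into one kernel-verified Lean document; each statement's English description precedes it below -/
import Mathlib

section
/- Let A₁,…,A_N be pairwise anticommuting self-adjoint unitary operators on a finite-dimensional complex Hilbert space, and let ψ be any unit vector. Then ∑ᵢ ⟨ψ, Aᵢψ⟩² ≤ 1. -/
open Matrix

lemma stmt2_aux_nonneg {d : ℕ} (v : Fin d → ℂ) : 0 ≤ (star v ⬝ᵥ v).re := by
  simp only [dotProduct, Pi.star_apply, Complex.re_sum]
  apply Finset.sum_nonneg
  intro i _
  simp only [RCLike.star_def, Complex.mul_re, Complex.conj_re, Complex.conj_im, neg_mul, sub_neg_eq_add]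
  nlinarith [sq_nonneg (v i).re, sq_nonneg (v i).im]

lemma stmt2_aux_norm {d : ℕ} (M : Matrix (Fin d) (Fin d) ℂ) (ψ : Fin d → ℂ) :
    star (M *ᵥ ψ) ⬝ᵥ (M *ᵥ ψ) = star ψ ⬝ᵥ (Mᴴ * M) *ᵥ ψ := by
  rw [star_mulVec, dotProduct_mulVec, dotProduct_mulVec, vecMul_vecMul]

lemma stmt2_aux_sum_mulVec {d N : ℕ} (M : Fin N → Matrix (Fin d) (Fin d) ℂ) (ψ : Fin d → ℂ) :
    (∑ i, M i) *ᵥ ψ = ∑ i, M i *ᵥ ψ :=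
  map_sum (Matrix.mulVec.addMonoidHomLeft ψ) M Finset.univ

lemma stmt2_aux_dot_sum {d N : ℕ} (x : Fin d → ℂ) (v : Fin N → Fin d → ℂ) :
    x ⬝ᵥ (∑ i, v i) = ∑ i, x ⬝ᵥ v i := by
  simp only [dotProduct, Finset.sum_apply, Finset.mul_sum]
  rw [Finset.sum_comm]

/-- For pairwise anticommuting self-adjoint unitaries and a unit vector ψ,
the expectation values satisfy ∑ᵢ ⟨ψ, Aᵢψ⟩² ≤ 1. -/
theorem stmt2 {d N : ℕ} (A : Fin N → Matrix (Fin d) (Fin d) ℂ)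
    (hsa : ∀ i, (A i)ᴴ = A i) (hunit : ∀ i, A i * A i = 1)
    (hanti : ∀ i j, i ≠ j → A i * A j = -(A j * A i))
    (ψ : Fin d → ℂ) (hψ : star ψ ⬝ᵥ ψ = 1) :
    ∑ i, ((star ψ ⬝ᵥ (A i).mulVec ψ).re) ^ 2 ≤ 1 := by
  set t : Fin N → ℝ := fun i => (star ψ ⬝ᵥ (A i).mulVec ψ).re with ht
  set s : ℝ := ∑ i, t i ^ 2 with hs
  have hs0 : 0 ≤ s := Finset.sum_nonneg fun i _ => sq_nonneg _
  set B : Matrix (Fin d) (Fin d) ℂ := ∑ i, (t i : ℂ) • A i with hB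
  have hBsa : Bᴴ = B := by
    simp [hB, conjTranspose_sum, conjTranspose_smul, hsa]
  -- B * B = s • 1
  have key : ∀ i j, A i * A j + A j * A i =
      if i = j then (2 : ℂ) • (1 : Matrix (Fin d) (Fin d) ℂ) else 0 := by
    intro i j
    by_cases h : i = j
    · subst h; simp [hunit, two_smul]
    · simp [h, hanti i j h]
  have h1 : B * B = ∑ i, ∑ j, ((t i : ℂ) * (t j : ℂ)) • (A i * A j) := by
    rw [hB, Finset.sum_mul_sum]
    refine Finset.sum_congr rfl fun i _ => Finset.sum_congr rfl fun j _ => ?_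
    rw [smul_mul_assoc, Matrix.mul_smul, smul_smul]
  have h2 : B * B = ∑ i, ∑ j, ((t i : ℂ) * (t j : ℂ)) • (A j * A i) := by
    rw [h1, Finset.sum_comm]
    refine Finset.sum_congr rfl fun i _ => Finset.sum_congr rfl fun j _ => ?_
    rw [mul_comm ((t j : ℂ)) ((t i : ℂ))]
  have hBB : B * B = ((s : ℂ)) • 1 := by
    have h3 : (2 : ℂ) • (B * B) = (2 : ℂ) • (((s : ℂ)) • (1 : Matrix (Fin d) (Fin d) ℂ)) := by
      calc (2 : ℂ) • (B * B) = B * B + B * B := two_smul _ _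
        _ = (∑ i, ∑ j, ((t i : ℂ) * (t j : ℂ)) • (A i * A j))
            + ∑ i, ∑ j, ((t i : ℂ) * (t j : ℂ)) • (A j * A i) := by rw [← h1, ← h2]
        _ = ∑ i, ∑ j, ((t i : ℂ) * (t j : ℂ)) • (A i * A j + A j * A i) := by
            rw [← Finset.sum_add_distrib]
            refine Finset.sum_congr rfl fun i _ => ?_
            rw [← Finset.sum_add_distrib]
            exact Finset.sum_congr rfl fun j _ => (smul_add _ _ _).symm
        _ = ∑ i, ((t i : ℂ) * (t i : ℂ)) • ((2 : ℂ) • (1 : Matrix (Fin d) (Fin d) ℂ)) := by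
            refine Finset.sum_congr rfl fun i _ => ?_
            rw [Finset.sum_eq_single i]
            · rw [key i i]; simp
            · intro j _ hji; rw [key i j]; simp [Ne.symm hji]
            · intro h; exact absurd (Finset.mem_univ i) h
        _ = (2 : ℂ) • (((s : ℂ)) • (1 : Matrix (Fin d) (Fin d) ℂ)) := by
            simp only [smul_smul, ← Finset.sum_smul]
            congr 1
            rw [hs]
            push_cast
            rw [Finset.mul_sum]
            refine Finset.sum_congr rfl fun i _ => ?_
            ring
    exact smul_right_injective _ (two_ne_zero) h3
  -- expectation of B
  have hψB : star ψ ⬝ᵥ B *ᵥ ψ = ∑ i, (t i : ℂ) * (star ψ ⬝ᵥ (A i) *ᵥ ψ) := by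
    rw [hB, stmt2_aux_sum_mulVec (fun i => (t i : ℂ) • A i) ψ]
    rw [stmt2_aux_dot_sum]
    refine Finset.sum_congr rfl fun i _ => ?_
    rw [smul_mulVec, dotProduct_smul, smul_eq_mul]
  have hψBre : (star ψ ⬝ᵥ B *ᵥ ψ).re = s := by
    rw [hψB, Complex.re_sum, hs]
    refine Finset.sum_congr rfl fun i _ => ?_
    simp only [Complex.mul_re, Complex.ofReal_re, Complex.ofReal_im, zero_mul, sub_zero]
    rw [ht]; ring
  -- the matrix C = B - s • 1
  set C : Matrix (Fin d) (Fin d) ℂ := B - (s : ℂ) • 1 with hC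
  have hCsa : Cᴴ = C := by
    simp [hC, conjTranspose_sub, conjTranspose_smul, hBsa, Complex.star_def,
      Complex.conj_ofReal]
  have hCC : C * C = ((((s + s ^ 2 : ℝ)) : ℂ) • 1) - (((2 * s : ℝ)) : ℂ) • B := by
    rw [hC, sub_mul, mul_sub, mul_sub, hBB]
    simp only [Matrix.smul_mul, Matrix.mul_smul, Matrix.one_mul, Matrix.mul_one, smul_smul]
    push_cast
    module
  have hpos : 0 ≤ s - s ^ 2 := by
    have h4 := stmt2_aux_nonneg (C *ᵥ ψ)
    rw [stmt2_aux_norm, hCsa, hCC] at h4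
    rw [sub_mulVec, smul_mulVec, smul_mulVec, dotProduct_sub,
      dotProduct_smul, dotProduct_smul, Matrix.one_mulVec, hψ] at h4
    simp only [smul_eq_mul, mul_one, Complex.sub_re, Complex.re_ofReal_mul,
      Complex.ofReal_re, hψBre] at h4
    nlinarith [h4]
  nlinarith [hpos, hs0]
end

section
/- Let A₁,…,A_N be pairwise anticommuting self-adjoint unitaries and ψ a unit vector with ∑ᵢ hᵢ⟨ψ, Aᵢψ⟩ = ±1 for some real coefficients with ∑ᵢ hᵢ² = 1. Then ⟨ψ, Aᵢψ⟩ = ±hᵢ for all i (with a single global sign), and in particular ∑ᵢ ⟨ψ, Aᵢψ⟩² = 1. -/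
open Matrix

/-!
Write `aᵢ = ⟨ψ, Aᵢψ⟩` (real, as `Aᵢ` is self-adjoint) and `t = ∑ aᵢ²`. The anticommutation
relations make `B = ∑ aᵢ Aᵢ` satisfy `B² = t`, while `⟨ψ, Bψ⟩ = t`; hence
`0 ≤ ‖(B - t)ψ‖² = t - t²`, i.e. `t ≤ 1`. Then `∑ (aᵢ - s hᵢ)² = t - 2s² + s² = t - 1 ≤ 0`,
so `aᵢ = s hᵢ` for every `i`.
-/

section Anticommuting

variable {ι R M : Type*} [CommSemiring R] [Ring M] [Algebra R M] {A : ι → M}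

theorem mul_sum_smul_add_sum_smul_mul_of_anticommute
    (hanti : ∀ i j, i ≠ j → A i * A j = -(A j * A i)) (c : ι → R) {s : Finset ι} {k : ι}
    (hk : k ∉ s) : A k * (∑ i ∈ s, c i • A i) + (∑ i ∈ s, c i • A i) * A k = 0 := by
  rw [Finset.mul_sum, Finset.sum_mul, ← Finset.sum_add_distrib]
  refine Finset.sum_eq_zero fun i hi => ?_
  rw [mul_smul_comm, smul_mul_assoc, ← smul_add, hanti k i (ne_of_mem_of_not_mem hi hk).symm,
    neg_add_cancel, smul_zero]

theorem sum_smul_mul_self_of_anticommute (hunit : ∀ i, A i * A i = 1)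
    (hanti : ∀ i j, i ≠ j → A i * A j = -(A j * A i)) (c : ι → R) (s : Finset ι) :
    (∑ i ∈ s, c i • A i) * (∑ i ∈ s, c i • A i) = (∑ i ∈ s, c i ^ 2) • 1 := by
  classical
  induction s using Finset.induction_on with
  | empty => simp
  | insert k s hk ih =>
    have hcross := mul_sum_smul_add_sum_smul_mul_of_anticommute hanti c hk
    rw [Finset.sum_insert hk, Finset.sum_insert hk, add_smul, ← ih]
    calc (c k • A k + ∑ i ∈ s, c i • A i) * (c k • A k + ∑ i ∈ s, c i • A i)
        = c k ^ 2 • (A k * A k) + c k • (A k * (∑ i ∈ s, c i • A i) + (∑ i ∈ s, c i • A i) * A k)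
          + (∑ i ∈ s, c i • A i) * (∑ i ∈ s, c i • A i) := by
          simp only [add_mul, mul_add, smul_mul_assoc, mul_smul_comm, smul_add, sq, mul_smul]
          abel
      _ = c k ^ 2 • 1 + (∑ i ∈ s, c i • A i) * (∑ i ∈ s, c i • A i) := by
          rw [hunit, hcross, smul_zero, add_zero]

end Anticommuting

namespace Matrix

open scoped ComplexOrder

variable {𝕜 n : Type*} [RCLike 𝕜] [Fintype n]

theorem IsHermitian.ofReal_re_star_dotProduct_mulVec {A : Matrix n n 𝕜} (hA : A.IsHermitian)
    (ψ : n → 𝕜) : (RCLike.re (star ψ ⬝ᵥ A *ᵥ ψ) : 𝕜) = star ψ ⬝ᵥ A *ᵥ ψ :=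
  RCLike.conj_eq_iff_re.mp (RCLike.conj_eq_iff_im.mpr (hA.im_star_dotProduct_mulVec_self ψ))

variable [DecidableEq n]

theorem le_one_of_mul_self_eq_smul_one {B : Matrix n n 𝕜} (hB : B.IsHermitian) {t : ℝ}
    (hB2 : B * B = (t : 𝕜) • 1) {ψ : n → 𝕜} (hψ : star ψ ⬝ᵥ ψ = 1)
    (hBψ : star ψ ⬝ᵥ B *ᵥ ψ = t) : t ≤ 1 := by
  set v := B *ᵥ ψ - (t : 𝕜) • ψ
  have hvv : star v ⬝ᵥ v = ((t - t ^ 2 : ℝ) : 𝕜) := by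
    have hstar : star v = star ψ ᵥ* B - (t : 𝕜) • star ψ := by
      rw [star_sub, star_mulVec, hB.eq, star_smul, RCLike.star_def, RCLike.conj_ofReal]
    have hBBψ : (star ψ ᵥ* B) ⬝ᵥ B *ᵥ ψ = t := by
      rw [← dotProduct_mulVec, mulVec_mulVec, hB2, smul_mulVec, one_mulVec, dotProduct_smul,
        hψ, smul_eq_mul, mul_one]
    rw [hstar, sub_dotProduct, dotProduct_sub, dotProduct_sub, hBBψ, smul_dotProduct,
      smul_dotProduct, dotProduct_smul, dotProduct_smul, ← dotProduct_mulVec, hBψ, hψ]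
    simp only [smul_eq_mul]
    push_cast
    ring
  have hnonneg : 0 ≤ t - t ^ 2 := RCLike.ofReal_nonneg.mp (hvv ▸ dotProduct_star_self_nonneg v)
  nlinarith

theorem sum_sq_re_star_dotProduct_mulVec_le_one {ι : Type*} [Fintype ι] {A : ι → Matrix n n 𝕜}
    (hsa : ∀ i, (A i).IsHermitian) (hunit : ∀ i, A i * A i = 1)
    (hanti : ∀ i j, i ≠ j → A i * A j = -(A j * A i)) {ψ : n → 𝕜} (hψ : star ψ ⬝ᵥ ψ = 1) :
    ∑ i, RCLike.re (star ψ ⬝ᵥ A i *ᵥ ψ) ^ 2 ≤ 1 := by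
  set a : ι → ℝ := fun i => RCLike.re (star ψ ⬝ᵥ A i *ᵥ ψ)
  set B : Matrix n n 𝕜 := ∑ i, a i • A i
  have hB : B.IsHermitian :=
    isSelfAdjoint_sum _ fun i _ => (hsa i).smul (IsSelfAdjoint.all (a i))
  have hB2 : B * B = ((∑ i, a i ^ 2 : ℝ) : 𝕜) • 1 := by
    rw [sum_smul_mul_self_of_anticommute hunit hanti, RCLike.real_smul_eq_coe_smul (K := 𝕜)]
  have hBψ : star ψ ⬝ᵥ B *ᵥ ψ = (∑ i, a i ^ 2 : ℝ) := by
    rw [sum_mulVec, dotProduct_sum]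
    push_cast
    refine Finset.sum_congr rfl fun i _ => ?_
    rw [smul_mulVec, dotProduct_smul, ← (hsa i).ofReal_re_star_dotProduct_mulVec ψ,
      RCLike.real_smul_eq_coe_mul, sq]
  exact le_one_of_mul_self_eq_smul_one hB hB2 hψ hBψ

end Matrix

theorem eq_mul_of_sum_mul_eq_of_sum_sq_le_one {ι : Type*} [Fintype ι] {a h : ι → ℝ} {s : ℝ}
    (ha : ∑ i, a i ^ 2 ≤ 1) (hh : ∑ i, h i ^ 2 = 1) (hs : s ^ 2 = 1)
    (hsum : ∑ i, h i * a i = s) (i : ι) : a i = s * h i := by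
  have hdist : ∑ j, (a j - s * h j) ^ 2 = ∑ j, a j ^ 2 - 1 := by
    have hexpand : ∀ j, (a j - s * h j) ^ 2 = a j ^ 2 - 2 * s * (h j * a j) + s ^ 2 * h j ^ 2 :=
      fun j => by ring
    simp only [hexpand, Finset.sum_add_distrib, Finset.sum_sub_distrib, ← Finset.mul_sum, hsum,
      hh, hs]
    linear_combination (-2) * hs
  have hzero : ∑ j, (a j - s * h j) ^ 2 = 0 :=
    le_antisymm (by linarith) (Finset.sum_nonneg fun j _ => sq_nonneg _)
  have hsq : (a i - s * h i) ^ 2 = 0 :=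
    (Finset.sum_eq_zero_iff_of_nonneg fun j _ => sq_nonneg _).mp hzero i (Finset.mem_univ i)
  linarith [pow_eq_zero_iff two_ne_zero |>.mp hsq]

/-- If ∑ᵢ hᵢ⟨ψ, Aᵢψ⟩ = ±1 with ∑ᵢ hᵢ² = 1, for pairwise anticommuting self-adjoint
unitaries Aᵢ and a unit vector ψ, then ⟨ψ, Aᵢψ⟩ = ±hᵢ for all i (with the same global
sign), and in particular ∑ᵢ ⟨ψ, Aᵢψ⟩² = 1. -/
theorem stmt3 {d N : ℕ} (A : Fin N → Matrix (Fin d) (Fin d) ℂ)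
    (hsa : ∀ i, (A i)ᴴ = A i) (hunit : ∀ i, A i * A i = 1)
    (hanti : ∀ i j, i ≠ j → A i * A j = -(A j * A i))
    (ψ : Fin d → ℂ) (hψ : star ψ ⬝ᵥ ψ = 1)
    (h : Fin N → ℝ) (hnorm : ∑ i, (h i) ^ 2 = 1)
    (s : ℝ) (hs : s = 1 ∨ s = -1)
    (hsum : ∑ i, h i * (star ψ ⬝ᵥ (A i).mulVec ψ).re = s) :
    (∀ i, (star ψ ⬝ᵥ (A i).mulVec ψ).re = s * h i) ∧
    ∑ i, ((star ψ ⬝ᵥ (A i).mulVec ψ).re) ^ 2 = 1 := by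
  have hs2 : s ^ 2 = 1 := by rcases hs with rfl | rfl <;> norm_num
  have hle := sum_sq_re_star_dotProduct_mulVec_le_one hsa hunit hanti hψ
  have heq : ∀ i, (star ψ ⬝ᵥ (A i).mulVec ψ).re = s * h i :=
    eq_mul_of_sum_mul_eq_of_sum_sq_le_one hle hnorm hs2 hsum
  refine ⟨heq, ?_⟩
  simp only [heq, mul_pow, hs2, one_mul, hnorm]
end

section
/- If ψ is an eigenvector of ∑ᵢ hᵢAᵢ where the Aᵢ are pairwise anticommuting self-adjoint unitaries and h ∈ ℝ^N is nonzero, then ∑ᵢ ⟨ψ, Aᵢψ⟩² = 1. -/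
open Matrix

lemma myMulVecSum {d N : ℕ} (M : Fin N → Matrix (Fin d) (Fin d) ℂ) (v : Fin d → ℂ) :
    (∑ i, M i) *ᵥ v = ∑ i, M i *ᵥ v := by
  ext j
  simp only [Matrix.mulVec, dotProduct, Finset.sum_apply, Matrix.sum_apply,
    Finset.sum_mul]
  rw [Finset.sum_comm]

lemma myDotSum {d N : ℕ} (v : Fin d → ℂ) (w : Fin N → Fin d → ℂ) :
    v ⬝ᵥ ∑ i, w i = ∑ i, v ⬝ᵥ w i := by
  simp only [dotProduct, Finset.sum_apply, Finset.mul_sum]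
  rw [Finset.sum_comm]

/-- If ψ is a unit eigenvector of ∑ᵢ hᵢAᵢ, where the Aᵢ are pairwise anticommuting
self-adjoint unitaries and h ≠ 0, then ∑ᵢ ⟨ψ, Aᵢψ⟩² = 1. -/
theorem stmt4 {d N : ℕ} (A : Fin N → Matrix (Fin d) (Fin d) ℂ)
    (hsa : ∀ i, (A i)ᴴ = A i) (hunit : ∀ i, A i * A i = 1)
    (hanti : ∀ i j, i ≠ j → A i * A j = -(A j * A i))
    (h : Fin N → ℝ) (hne : h ≠ 0)
    (ψ : Fin d → ℂ) (hψ : star ψ ⬝ᵥ ψ = 1)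
    (μ : ℂ) (heig : (∑ i, (h i : ℂ) • A i).mulVec ψ = μ • ψ) :
    ∑ i, ((star ψ ⬝ᵥ (A i).mulVec ψ).re) ^ 2 = 1 := by
  set H : Matrix (Fin d) (Fin d) ℂ := ∑ i, (h i : ℂ) • A i with hH
  -- key anticommutation identity
  have key : ∀ c e : Fin N → ℂ,
      (∑ i, c i • A i) * (∑ j, e j • A j) + (∑ j, e j • A j) * (∑ i, c i • A i)
        = (2 * ∑ i, c i * e i) • (1 : Matrix (Fin d) (Fin d) ℂ) := by
    intro c e
    have step : ∀ i : Fin N,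
        (∑ j, (c i • A i) * (e j • A j)) + (∑ j, (e j • A j) * (c i • A i))
          = (2 * (c i * e i)) • (1 : Matrix (Fin d) (Fin d) ℂ) := by
      intro i
      rw [← Finset.sum_add_distrib]
      rw [Finset.sum_eq_single_of_mem i (Finset.mem_univ i)]
      · rw [smul_mul_smul_comm, smul_mul_smul_comm, hunit, ← add_smul]
        congr 1
        ring
      · intro j _ hji
        rw [smul_mul_smul_comm, smul_mul_smul_comm, hanti i j (fun hh => hji hh.symm),
          smul_neg, mul_comm (e j) (c i)]
        exact neg_add_cancel _
    rw [Finset.sum_mul_sum, Finset.sum_mul_sum]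
    rw [Finset.sum_comm (s := Finset.univ) (t := Finset.univ)
      (f := fun p q => (e p • A p) * (c q • A q))]
    rw [← Finset.sum_add_distrib]
    rw [Finset.sum_congr rfl (fun i _ => step i)]
    rw [Finset.mul_sum, Finset.sum_smul]
  -- hermitian dot product transfer
  have herm : ∀ (M : Matrix (Fin d) (Fin d) ℂ), Mᴴ = M → ∀ w,
      star ψ ⬝ᵥ M *ᵥ w = star (M *ᵥ ψ) ⬝ᵥ w := by
    intro M hM w
    rw [Matrix.star_mulVec, hM, ← Matrix.dotProduct_mulVec]
  -- a i real
  set a : Fin N → ℂ := fun i => star ψ ⬝ᵥ (A i) *ᵥ ψ with ha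
  have areal : ∀ i, (starRingEnd ℂ) (a i) = a i := by
    intro i
    have h1 : a i = star ((A i) *ᵥ ψ) ⬝ᵥ ψ := herm (A i) (hsa i) ψ
    have h2 : star (A i *ᵥ ψ) ⬝ᵥ star (star ψ) = (starRingEnd ℂ) (a i) :=
      star_dotProduct_star _ _
    rw [← h2, star_star, ← h1]
  have acoe : ∀ i, ((a i).re : ℂ) = a i := fun i => Complex.conj_eq_iff_re.mp (areal i)
  -- μ = ∑ h i * a i
  have hmu : μ = ∑ i, (h i : ℂ) * a i := by
    have : star ψ ⬝ᵥ H *ᵥ ψ = μ := by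
      rw [heig, dotProduct_smul, hψ, smul_eq_mul, mul_one]
    rw [← this, hH, myMulVecSum, myDotSum]
    refine Finset.sum_congr rfl fun i _ => ?_
    rw [Matrix.smul_mulVec, dotProduct_smul, smul_eq_mul]
  have hmureal : (starRingEnd ℂ) μ = μ := by
    rw [hmu, map_sum]
    refine Finset.sum_congr rfl fun i _ => ?_
    rw [RingHom.map_mul, areal, Complex.conj_ofReal]
  have hHsa : Hᴴ = H := by
    rw [hH, Matrix.conjTranspose_sum]
    refine Finset.sum_congr rfl fun i _ => ?_
    rw [Matrix.conjTranspose_smul, hsa, Complex.star_def, Complex.conj_ofReal]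
  -- μ ≠ 0
  have hmusq : μ * μ = ∑ i, (h i : ℂ) * (h i : ℂ) := by
    have h2 : H * H + H * H = (2 * ∑ i, (h i : ℂ) * (h i : ℂ)) • 1 :=
      key (fun i => (h i : ℂ)) (fun i => (h i : ℂ))
    have h3 : star ψ ⬝ᵥ (H * H + H * H) *ᵥ ψ = 2 * (μ * μ) := by
      rw [Matrix.add_mulVec, dotProduct_add, ← Matrix.mulVec_mulVec, heig,
        Matrix.mulVec_smul, heig, smul_smul, dotProduct_smul, hψ, smul_eq_mul, mul_one]
      ring
    rw [h2, Matrix.smul_mulVec, Matrix.one_mulVec, dotProduct_smul, hψ, smul_eq_mul,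
      mul_one] at h3
    exact (mul_left_cancel₀ two_ne_zero h3).symm
  have hmune : μ ≠ 0 := by
    intro h0
    rw [h0, mul_zero] at hmusq
    obtain ⟨i, hi⟩ : ∃ i, h i ≠ 0 := by
      by_contra hc
      push_neg at hc
      exact hne (funext hc)
    have hzero : ∑ i, ((h i : ℝ) * h i) = 0 := by
      have h4 : ((∑ i, (h i) * (h i) : ℝ) : ℂ) = 0 := by push_cast; rw [← hmusq]
      exact_mod_cast h4
    have hge : ∀ j ∈ Finset.univ, (0:ℝ) ≤ h j * h j := fun j _ => mul_self_nonneg _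
    have := (Finset.sum_eq_zero_iff_of_nonneg hge).mp hzero i (Finset.mem_univ i)
    exact hi (by nlinarith)
  -- B and the main identity
  set B : Matrix (Fin d) (Fin d) ℂ := ∑ i, a i • A i with hB
  set s : ℂ := ∑ i, a i * a i with hs
  have hBpsi : star ψ ⬝ᵥ B *ᵥ ψ = s := by
    rw [hB, myMulVecSum, myDotSum, hs]
    refine Finset.sum_congr rfl fun i _ => ?_
    rw [Matrix.smul_mulVec, dotProduct_smul, smul_eq_mul, ha]
  have hkey2 : B * H + H * B = (2 * μ) • 1 := by
    rw [hB, hH, key a (fun i => (h i : ℂ))]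
    congr 2
    rw [hmu]
    exact Finset.sum_congr rfl fun i _ => mul_comm _ _
  have hBH : star ψ ⬝ᵥ (B * H) *ᵥ ψ = μ * s := by
    rw [← Matrix.mulVec_mulVec, heig, Matrix.mulVec_smul, dotProduct_smul, hBpsi, smul_eq_mul]
  have hHB : star ψ ⬝ᵥ (H * B) *ᵥ ψ = μ * s := by
    rw [← Matrix.mulVec_mulVec, herm H hHsa, heig, star_smul, smul_dotProduct, hBpsi,
      smul_eq_mul]
    rw [show (star μ : ℂ) = (starRingEnd ℂ) μ from rfl, hmureal]
  have hfin : μ * s = μ := by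
    have hsum : star ψ ⬝ᵥ (B * H + H * B) *ᵥ ψ = 2 * μ := by
      rw [hkey2, Matrix.smul_mulVec, Matrix.one_mulVec, dotProduct_smul, hψ, smul_eq_mul,
        mul_one]
    rw [Matrix.add_mulVec, dotProduct_add, hBH, hHB] at hsum
    have h2 : 2 * (μ * s) = 2 * μ := by linear_combination hsum
    exact mul_left_cancel₀ two_ne_zero h2
  have hs1 : s = 1 := by
    have : μ * s = μ * 1 := by rw [mul_one]; exact hfin
    exact mul_left_cancel₀ hmune this
  -- conclude
  have hfinal : ((∑ i, ((a i).re) ^ 2 : ℝ) : ℂ) = 1 := by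
    push_cast
    rw [← hs1, hs]
    refine Finset.sum_congr rfl fun i _ => ?_
    rw [acoe]
    ring
  exact_mod_cast hfinal
end

section
/- Let ψ be a unit eigenvector of H = h₀I + ∑ᵢ hᵢCᵢ, where the Cᵢ are pairwise anticommuting self-adjoint unitaries and not all hᵢ are zero (i > 0). Then the eigenvalue of ψ equals h₀ + ∑ᵢ hᵢ⟨ψ, Cᵢψ⟩, and ∑ᵢ ⟨ψ, Cᵢψ⟩² = 1. -/
open Matrix

/-!
Let `eᵢ = ⟨ψ, Cᵢ ψ⟩`, which is real because `Cᵢ` is Hermitian. Anticommutation makes the cross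
terms cancel, so `(∑ aᵢ Cᵢ)² = |a|² • 1` for every real `a`. Applied to `K = ∑ hᵢ Cᵢ`, for which
`K ψ = (μ - h₀) ψ`, this gives `μ - h₀ = ⟨h, e⟩` and `⟨h, e⟩² = |h|²`; Cauchy–Schwarz in `ℝᴺ`
then forces `|e| ≥ 1`. Conversely `⟨ψ, A ψ⟩² ≤ ‖A ψ‖² = ⟨ψ, A² ψ⟩` for Hermitian `A`, and for
`A = ∑ eᵢ Cᵢ` this reads `|e|⁴ ≤ |e|²`, so `|e| ≤ 1`.
-/

theorem sum_smul_mul_self_eq_of_anticomm {ι R A : Type*} [CommRing R] [Ring A] [Algebra R A]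
    (C : ι → A) (hsq : ∀ i, C i * C i = 1) (hanti : ∀ i j, i ≠ j → C i * C j = -(C j * C i))
    (a : ι → R) (s : Finset ι) :
    (∑ i ∈ s, a i • C i) * (∑ i ∈ s, a i • C i) = (∑ i ∈ s, a i ^ 2) • (1 : A) := by
  induction s using Finset.cons_induction with
  | empty => simp
  | cons j s hj ih =>
    set S := ∑ i ∈ s, a i • C i
    have hcross : C j * S + S * C j = 0 := by
      rw [Finset.mul_sum, Finset.sum_mul, ← Finset.sum_add_distrib]
      refine Finset.sum_eq_zero fun i hi => ?_
      rw [mul_smul_comm, smul_mul_assoc, ← smul_add, hanti j i (ne_of_mem_of_not_mem hi hj).symm,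
        neg_add_cancel, smul_zero]
    rw [Finset.sum_cons, Finset.sum_cons]
    calc (a j • C j + S) * (a j • C j + S)
        = a j ^ 2 • (C j * C j) + a j • (C j * S + S * C j) + S * S := by
          simp only [add_mul, mul_add, smul_mul_assoc, mul_smul_comm, smul_add]
          module
      _ = (a j ^ 2 + ∑ i ∈ s, a i ^ 2) • (1 : A) := by
          rw [hsq, hcross, ih, smul_zero, add_zero, add_smul]

section
variable {n : Type*} [Fintype n]

theorem dotProduct_mulVec_eq_of_mulVec_eq_smul {R : Type*} [CommSemiring R] {A : Matrix n n R}
    {u ψ : n → R} {μ : R} (hψ : A *ᵥ ψ = μ • ψ) (hu : u ⬝ᵥ ψ = 1) : u ⬝ᵥ A *ᵥ ψ = μ := by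
  rw [hψ, dotProduct_smul, hu, smul_eq_mul, mul_one]

theorem dotProduct_sum_smul_mulVec {ι R : Type*} [CommSemiring R] (s : Finset ι)
    (C : ι → Matrix n n R) (a : ι → R) (u ψ : n → R) :
    u ⬝ᵥ (∑ i ∈ s, a i • C i) *ᵥ ψ = ∑ i ∈ s, a i * (u ⬝ᵥ C i *ᵥ ψ) := by
  simp only [sum_mulVec, dotProduct_sum, smul_mulVec, dotProduct_smul, smul_eq_mul]

theorem Matrix.IsHermitian.star_dotProduct_mulVec_self_eq_re {A : Matrix n n ℂ}
    (hA : A.IsHermitian) (ψ : n → ℂ) : star ψ ⬝ᵥ A *ᵥ ψ = (star ψ ⬝ᵥ A *ᵥ ψ).re :=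
  Complex.ext rfl (by simpa using hA.im_star_dotProduct_mulVec_self ψ)

theorem norm_star_dotProduct_sq_le (u v : n → ℂ) :
    ‖star u ⬝ᵥ v‖ ^ 2 ≤ (star u ⬝ᵥ u).re * (star v ⬝ᵥ v).re := by
  have hnorm : ∀ w : n → ℂ, ‖WithLp.toLp 2 w‖ ^ 2 = (star w ⬝ᵥ w).re := fun w => by
    rw [norm_sq_eq_re_inner (𝕜 := ℂ), EuclideanSpace.inner_toLp_toLp, dotProduct_comm]; rfl
  have cs := norm_inner_le_norm (𝕜 := ℂ) (WithLp.toLp 2 u) (WithLp.toLp 2 v)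
  rw [EuclideanSpace.inner_toLp_toLp, dotProduct_comm] at cs
  rw [← hnorm, ← hnorm, ← mul_pow]
  exact pow_le_pow_left₀ (norm_nonneg _) cs 2

theorem Matrix.IsHermitian.re_star_dotProduct_mulVec_sq_le {A : Matrix n n ℂ}
    (hA : A.IsHermitian) {ψ : n → ℂ} (hψ : star ψ ⬝ᵥ ψ = 1) :
    (star ψ ⬝ᵥ A *ᵥ ψ).re ^ 2 ≤ (star ψ ⬝ᵥ (A * A) *ᵥ ψ).re := by
  have hAA : star (A *ᵥ ψ) ⬝ᵥ A *ᵥ ψ = star ψ ⬝ᵥ (A * A) *ᵥ ψ := by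
    rw [star_mulVec, hA.eq, ← dotProduct_mulVec, mulVec_mulVec]
  calc (star ψ ⬝ᵥ A *ᵥ ψ).re ^ 2 ≤ ‖star ψ ⬝ᵥ A *ᵥ ψ‖ ^ 2 :=
        sq_le_sq' (neg_le_of_abs_le (Complex.abs_re_le_norm _)) (Complex.re_le_norm _)
    _ ≤ (star ψ ⬝ᵥ ψ).re * (star (A *ᵥ ψ) ⬝ᵥ A *ᵥ ψ).re := norm_star_dotProduct_sq_le _ _
    _ = (star ψ ⬝ᵥ (A * A) *ᵥ ψ).re := by rw [hψ, hAA, Complex.one_re, one_mul]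

theorem sq_eq_sum_sq_of_mulVec_eq_smul [DecidableEq n] {ι R : Type*} [Fintype ι] [CommRing R]
    {C : ι → Matrix n n R} (hunit : ∀ i, C i * C i = 1)
    (hanti : ∀ i j, i ≠ j → C i * C j = -(C j * C i)) {a : ι → R} {u ψ : n → R} {c : R}
    (hψ : (∑ i, a i • C i) *ᵥ ψ = c • ψ) (hu : u ⬝ᵥ ψ = 1) : c ^ 2 = ∑ i, a i ^ 2 := by
  have hsq : ((∑ i, a i • C i) * (∑ i, a i • C i)) *ᵥ ψ = c ^ 2 • ψ := by
    rw [← mulVec_mulVec, hψ, mulVec_smul, hψ, smul_smul, sq]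
  rw [← dotProduct_mulVec_eq_of_mulVec_eq_smul hsq hu,
    sum_smul_mul_self_eq_of_anticomm C hunit hanti, smul_mulVec, one_mulVec, dotProduct_smul, hu,
    smul_eq_mul, mul_one]

theorem star_dotProduct_sum_ofReal_smul_mulVec {ι : Type*} [Fintype ι]
    {C : ι → Matrix n n ℂ} (hsa : ∀ i, (C i).IsHermitian) (a : ι → ℝ) (ψ : n → ℂ) :
    star ψ ⬝ᵥ (∑ i, (a i : ℂ) • C i) *ᵥ ψ = ((∑ i, a i * (star ψ ⬝ᵥ C i *ᵥ ψ).re : ℝ) : ℂ) := by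
  rw [dotProduct_sum_smul_mulVec]
  push_cast
  simp only [← (hsa _).star_dotProduct_mulVec_self_eq_re]

theorem sq_sum_mul_re_star_dotProduct_mulVec_le [DecidableEq n] {ι : Type*} [Fintype ι]
    {C : ι → Matrix n n ℂ} (hsa : ∀ i, (C i).IsHermitian) (hunit : ∀ i, C i * C i = 1)
    (hanti : ∀ i j, i ≠ j → C i * C j = -(C j * C i)) {ψ : n → ℂ} (hψ : star ψ ⬝ᵥ ψ = 1)
    (a : ι → ℝ) : (∑ i, a i * (star ψ ⬝ᵥ C i *ᵥ ψ).re) ^ 2 ≤ ∑ i, a i ^ 2 := by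
  have hA : (∑ i, (a i : ℂ) • C i).IsHermitian :=
    isSelfAdjoint_sum _ fun i _ => (hsa i).smul (Complex.conj_ofReal (a i))
  have := hA.re_star_dotProduct_mulVec_sq_le hψ
  rw [sum_smul_mul_self_eq_of_anticomm C hunit hanti, smul_mulVec, one_mulVec, dotProduct_smul,
    hψ, star_dotProduct_sum_ofReal_smul_mulVec hsa] at this
  simpa [Complex.re_sum, ← Complex.ofReal_pow] using this

end

/-- If ψ is a unit eigenvector of H = h₀I + ∑ᵢ hᵢCᵢ with the Cᵢ pairwise anticommuting
self-adjoint unitaries and not all hᵢ zero, then the eigenvalue equals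
h₀ + ∑ᵢ hᵢ⟨ψ, Cᵢψ⟩ and ∑ᵢ ⟨ψ, Cᵢψ⟩² = 1. -/
theorem stmt15 {d N : ℕ} (C : Fin N → Matrix (Fin d) (Fin d) ℂ)
    (hsa : ∀ i, (C i)ᴴ = C i) (hunit : ∀ i, C i * C i = 1)
    (hanti : ∀ i j, i ≠ j → C i * C j = -(C j * C i))
    (h0 : ℝ) (h : Fin N → ℝ) (hne : ∃ i, h i ≠ 0)
    (ψ : Fin d → ℂ) (hψ : star ψ ⬝ᵥ ψ = 1) (μ : ℂ)
    (heig : ((h0 : ℂ) • (1 : Matrix (Fin d) (Fin d) ℂ) + ∑ i, (h i : ℂ) • C i).mulVec ψ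
      = μ • ψ) :
    μ = ((h0 + ∑ i, h i * (star ψ ⬝ᵥ (C i).mulVec ψ).re : ℝ) : ℂ) ∧
    ∑ i, ((star ψ ⬝ᵥ (C i).mulVec ψ).re) ^ 2 = 1 := by
  set e : Fin N → ℝ := fun i => (star ψ ⬝ᵥ C i *ᵥ ψ).re
  have hK : (∑ i, (h i : ℂ) • C i) *ᵥ ψ = (μ - h0) • ψ := by
    rw [sub_smul, ← heig, add_mulVec, smul_mulVec, one_mulVec, add_sub_cancel_left]
  have hμ : μ - h0 = ((∑ i, h i * e i : ℝ) : ℂ) := by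
    rw [← dotProduct_mulVec_eq_of_mulVec_eq_smul hK hψ,
      star_dotProduct_sum_ofReal_smul_mulVec hsa]
  have hsat : (∑ i, h i * e i) ^ 2 = ∑ i, h i ^ 2 := by
    have := sq_eq_sum_sq_of_mulVec_eq_smul hunit hanti hK hψ
    rw [hμ] at this
    exact_mod_cast this
  have hlow : 1 ≤ ∑ i, e i ^ 2 := by
    obtain ⟨i, hi⟩ := hne
    have hpos : 0 < ∑ i, h i ^ 2 :=
      Finset.sum_pos' (fun j _ => sq_nonneg _) ⟨i, Finset.mem_univ i, by positivity⟩
    have hcs := Finset.sum_mul_sq_le_sq_mul_sq Finset.univ h e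
    rw [hsat] at hcs
    exact le_of_mul_le_mul_left (by linarith) hpos
  have hup : (∑ i, e i * e i) ^ 2 ≤ ∑ i, e i ^ 2 :=
    sq_sum_mul_re_star_dotProduct_mulVec_le hsa hunit hanti hψ e
  simp only [← sq] at hup
  refine ⟨?_, by nlinarith⟩
  rw [Complex.ofReal_add, ← hμ]
  ring
end

section
/- Let C₁,…,C_N be pairwise anticommuting self-adjoint unitaries and r ∈ ℝ^N a unit vector. If ψ is a unit eigenvector of 𝒜(r) = ∑ᵢ rᵢCᵢ with eigenvalue +1, then ⟨ψ, Cᵢψ⟩ = rᵢ for all i. -/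
open Matrix

/-- If ψ is a unit eigenvector of 𝒜(r) = ∑ᵢ rᵢCᵢ with eigenvalue +1, where the Cᵢ are
pairwise anticommuting self-adjoint unitaries and r is a real unit vector, then
⟨ψ, Cᵢψ⟩ = rᵢ for all i. -/
theorem stmt16 {d N : ℕ} (C : Fin N → Matrix (Fin d) (Fin d) ℂ)
    (hsa : ∀ i, (C i)ᴴ = C i) (hunit : ∀ i, C i * C i = 1)
    (hanti : ∀ i j, i ≠ j → C i * C j = -(C j * C i))
    (r : Fin N → ℝ) (hr : ∑ i, (r i) ^ 2 = 1)
    (ψ : Fin d → ℂ) (hψ : star ψ ⬝ᵥ ψ = 1)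
    (heig : (∑ i, (r i : ℂ) • C i).mulVec ψ = ψ) :
    ∀ i, star ψ ⬝ᵥ (C i).mulVec ψ = (r i : ℂ) := by
  intro i
  set B : Matrix (Fin d) (Fin d) ℂ := ∑ j, (r j : ℂ) • C j with hB
  have hBH : Bᴴ = B := by
    simp [hB, conjTranspose_sum, conjTranspose_smul, hsa, Complex.star_def]
  have hkey : C i * B + B * C i = ((2 * r i : ℝ) : ℂ) • 1 := by
    rw [hB, Finset.mul_sum, Finset.sum_mul, ← Finset.sum_add_distrib,
      Finset.sum_eq_single i]
    · rw [mul_smul_comm, smul_mul_assoc, hunit i, ← smul_add]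
      push_cast
      rw [two_mul, add_smul, smul_add]
    · intro j _ hj
      rw [mul_smul_comm, smul_mul_assoc, ← smul_add, hanti i j (Ne.symm hj)]
      simp
    · intro h; exact absurd (Finset.mem_univ i) h
  -- left substitution: star ψ ᵥ* B = star ψ
  have hleft : star ψ ᵥ* B = star ψ := by
    have := congrArg star heig
    rwa [star_mulVec, hBH] at this
  have h1 : star ψ ⬝ᵥ (C i * B) *ᵥ ψ = star ψ ⬝ᵥ (C i) *ᵥ ψ := by
    rw [← mulVec_mulVec, heig]
  have h2 : star ψ ⬝ᵥ (B * C i) *ᵥ ψ = star ψ ⬝ᵥ (C i) *ᵥ ψ := by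
    rw [← mulVec_mulVec, dotProduct_mulVec, hleft]
  have h3 : star ψ ⬝ᵥ (C i * B + B * C i) *ᵥ ψ
      = 2 * (star ψ ⬝ᵥ (C i) *ᵥ ψ) := by
    rw [add_mulVec, dotProduct_add, h1, h2, two_mul]
  rw [hkey] at h3
  have h4 : star ψ ⬝ᵥ (((2 * r i : ℝ) : ℂ) • (1 : Matrix (Fin d) (Fin d) ℂ)) *ᵥ ψ
      = ((2 * r i : ℝ) : ℂ) := by
    rw [smul_mulVec, one_mulVec, dotProduct_smul, hψ, smul_eq_mul, mul_one]
  rw [h4] at h3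
  push_cast at h3
  exact (mul_left_cancel₀ two_ne_zero h3).symm
end
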